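/- arXiv:2111.01601 — 3 statements merged into one kernel-verified Lean document; each statement's English description precedes it below -/
import Mathlib

section
/- For any positive integer $n$ and any real number $y \geq 1$, the indicator function of $y$-smooth numbers satisfies the Buchstab-type identity: $\mathbb{1}_{P^+(n) \leq y} = 1 + \sum_{j=1}^{3} (-1)^j \sum_{p_1 \cdots p_j \mid n,\ y < p_1 < \cdots < p_j} 1 + \sum_{p_1 \cdots p_4 \mid n,\ y < p_1 < \cdots < p_4} \mathbb{1}_{P^+(n/(p_1 p_2 p_3 p_4)) \leq p_4}$, where the sums run over primes $p_1, \ldots, p_j$ with the stated divisibility and ordering conditions. -/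
/-!
For `m > 0` and `z ≥ 1`, exactly one prime `p > z` dividing `m` satisfies `P⁺(m/p) ≤ p`, namely
`p = P⁺(m)`, and it exists precisely when `P⁺(m) > z`. This gives the Buchstab identity
`𝟙_{P⁺(m) ≤ z} = 1 - ∑_{p ∣ m, p > z} 𝟙_{P⁺(m/p) ≤ p}`. Applying it to `n`, then to
`n/p₁` with `z = p₁`, to `n/(p₁p₂)` with `z = p₂`, and to `n/(p₁p₂p₃)` with `z = p₃`, gives the
identity, since a prime `q > p_j` divides `n/(p₁⋯p_j)` exactly when it divides `n`.
-/

/-- The largest prime factor of `n`, with the convention `P⁺(1) = 1`. -/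
def Pplus (n : ℕ) : ℕ := if n ≤ 1 then 1 else n.primeFactors.sup id

/-- The prime divisors of `n` exceeding `y`. -/
noncomputable def bigPrimes (n : ℕ) (y : ℝ) : Finset ℕ :=
  n.divisors.filter (fun p : ℕ => p.Prime ∧ y < (p : ℝ))

lemma Nat.div_pos_of_dvd {n D : ℕ} (hn : 0 < n) (hD : D ∣ n) : 0 < n / D :=
  Nat.div_pos (Nat.le_of_dvd hn hD) (Nat.pos_of_dvd_of_pos hD hn)

lemma Pplus_le_iff {m k : ℕ} (hk : 1 ≤ k) :
    Pplus m ≤ k ↔ ∀ q ∈ m.primeFactors, q ≤ k := by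
  unfold Pplus
  split_ifs with h
  · have hm : m.primeFactors = ∅ := by interval_cases m <;> simp
    simp [hm, hk]
  · simp [Finset.sup_le_iff]

lemma le_Pplus {m p : ℕ} (hp : p ∈ m.primeFactors) : p ≤ Pplus m := by
  have hm : ¬ m ≤ 1 := fun h => by interval_cases m <;> simp at hp
  rw [Pplus, if_neg hm]
  exact Finset.le_sup (f := id) hp

lemma Pplus_mem_primeFactors {m : ℕ} (hm : 1 < m) : Pplus m ∈ m.primeFactors := by
  rw [Pplus, if_neg hm.not_ge]
  obtain ⟨q, hq, hq_eq⟩ :=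
    Finset.exists_mem_eq_sup _ (Nat.nonempty_primeFactors.2 hm) id
  rwa [hq_eq]

lemma Pplus_div_le_iff {m p : ℕ} (hp : p ∈ m.primeFactors) :
    Pplus (m / p) ≤ p ↔ Pplus m ≤ p := by
  obtain ⟨hp_prime, hpm, hm⟩ := Nat.mem_primeFactors.1 hp
  have hmp : m / p ≠ 0 := (Nat.div_pos_of_dvd (Nat.pos_of_ne_zero hm) hpm).ne'
  have hfac : m.primeFactors = {p} ∪ (m / p).primeFactors := by
    rw [← hp_prime.primeFactors, ← Nat.primeFactors_mul hp_prime.ne_zero hmp,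
      Nat.mul_div_cancel' hpm]
  rw [Pplus_le_iff hp_prime.one_le, Pplus_le_iff hp_prime.one_le, hfac]
  simp

lemma mem_bigPrimes {n p : ℕ} {y : ℝ} : p ∈ bigPrimes n y ↔ p ∈ n.primeFactors ∧ y < p := by
  simp only [bigPrimes, Finset.mem_filter, Nat.mem_divisors, Nat.mem_primeFactors]
  tauto

lemma Pplus_mem_bigPrimes_iff {m : ℕ} {z : ℝ} (hm : 0 < m) (hz : 1 ≤ z) :
    Pplus m ∈ bigPrimes m z ↔ z < Pplus m := by
  rw [mem_bigPrimes]
  rcases Nat.lt_or_ge 1 m with hm1 | hm1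
  · exact and_iff_right (Pplus_mem_primeFactors hm1)
  · obtain rfl : m = 1 := by omega
    simp [Pplus, hz]

theorem buchstab_identity {m : ℕ} {z : ℝ} (hm : 0 < m) (hz : 1 ≤ z) :
    (if (Pplus m : ℝ) ≤ z then (1 : ℤ) else 0)
      = 1 - ∑ p ∈ bigPrimes m z, if Pplus (m / p) ≤ p then 1 else 0 := by
  have hsum : (∑ p ∈ bigPrimes m z, if Pplus (m / p) ≤ p then (1 : ℤ) else 0)
      = if Pplus m ∈ bigPrimes m z then 1 else 0 := by
    rw [← Finset.sum_ite_eq (bigPrimes m z) (Pplus m) (fun _ => (1 : ℤ))]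
    refine Finset.sum_congr rfl fun p hp => ?_
    have hp_fac := (mem_bigPrimes.1 hp).1
    simp only [Pplus_div_le_iff hp_fac, (le_Pplus hp_fac).ge_iff_eq']
  simp only [hsum, Pplus_mem_bigPrimes_iff hm hz, ← not_le]
  split_ifs <;> simp

lemma bigPrimes_div_eq_filter {n D p : ℕ} {y : ℝ} (hn : 0 < n) (hD : D ∣ n)
    (hDp : ∀ r ∈ D.primeFactors, r ≤ p) (hyp : y ≤ p) :
    bigPrimes (n / D) p = (bigPrimes n y).filter (p < ·) := by
  ext q
  simp only [Finset.mem_filter, mem_bigPrimes, Nat.mem_primeFactors, Nat.cast_lt]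
  constructor
  · rintro ⟨⟨hq, hqnD, -⟩, hpq⟩
    exact ⟨⟨⟨hq, hqnD.trans (Nat.div_dvd_of_dvd hD), hn.ne'⟩,
      hyp.trans_lt (Nat.cast_lt.2 hpq)⟩, hpq⟩
  · rintro ⟨⟨⟨hq, hqn, -⟩, -⟩, hpq⟩
    have hqD : q.Coprime D := (Nat.Prime.coprime_iff_not_dvd hq).2 fun hqD =>
      absurd (hDp q (Nat.mem_primeFactors.2 ⟨hq, hqD, (Nat.pos_of_dvd_of_pos hD hn).ne'⟩)) (by omega)
    exact ⟨⟨hq, hqD.dvd_of_dvd_mul_right (by rwa [Nat.div_mul_cancel hD]),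
      (Nat.div_pos_of_dvd hn hD).ne'⟩, hpq⟩

lemma mul_dvd_of_mem_filter_bigPrimes {n D p q : ℕ} {y : ℝ} (hD : D ∣ n)
    (hDp : ∀ r ∈ D.primeFactors, r ≤ p) (hq : q ∈ (bigPrimes n y).filter (p < ·)) :
    D * q ∣ n ∧ ∀ r ∈ (D * q).primeFactors, r ≤ q := by
  obtain ⟨hq, hpq⟩ := Finset.mem_filter.1 hq
  obtain ⟨hq_prime, hqn, hn⟩ := Nat.mem_primeFactors.1 (mem_bigPrimes.1 hq).1
  have hD0 : D ≠ 0 := by rintro rfl; exact hn (zero_dvd_iff.1 hD)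
  have hDq : D.Coprime q := ((Nat.Prime.coprime_iff_not_dvd hq_prime).2 fun hqD =>
    absurd (hDp q (Nat.mem_primeFactors.2 ⟨hq_prime, hqD, hD0⟩)) (by omega)).symm
  refine ⟨hDq.mul_dvd_of_dvd_of_dvd hD hqn, fun r hr => ?_⟩
  rw [Nat.primeFactors_mul hD0 hq_prime.ne_zero, hq_prime.primeFactors] at hr
  rcases Finset.mem_union.1 hr with hr | hr
  · exact (hDp r hr).trans hpq.le
  · exact (Finset.mem_singleton.1 hr).le

theorem buchstab_identity_div {n D p : ℕ} {y : ℝ} (hn : 0 < n) (hD : D ∣ n)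
    (hDp : ∀ r ∈ D.primeFactors, r ≤ p) (hy : 1 ≤ y) (hyp : y ≤ p) :
    (if Pplus (n / D) ≤ p then (1 : ℤ) else 0)
      = 1 - ∑ q ∈ (bigPrimes n y).filter (p < ·),
          if Pplus (n / (D * q)) ≤ q then 1 else 0 := by
  have h := buchstab_identity (z := p) (Nat.div_pos_of_dvd hn hD) (hy.trans hyp)
  simp only [Nat.cast_le] at h
  simp only [h, bigPrimes_div_eq_filter hn hD hDp hyp, Nat.div_div_eq_div_mul]

/-- The iterated Buchstab identity: for a positive integer `n` and real `y ≥ 1`,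
`𝟙_{P⁺(n) ≤ y} = 1 + ∑_{j=1}^{3} (-1)^j ∑_{p₁⋯p_j ∣ n, y < p₁ < ⋯ < p_j} 1
 + ∑_{p₁⋯p₄ ∣ n, y < p₁ < ⋯ < p₄} 𝟙_{P⁺(n/(p₁p₂p₃p₄)) ≤ p₄}`. -/
theorem stmt5 (n : ℕ) (hn : 0 < n) (y : ℝ) (hy : 1 ≤ y) :
    (if (Pplus n : ℝ) ≤ y then (1 : ℤ) else 0)
      = 1
        - (∑ p₁ ∈ bigPrimes n y, 1)
        + (∑ p₁ ∈ bigPrimes n y, ∑ p₂ ∈ (bigPrimes n y).filter (p₁ < ·), 1)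
        - (∑ p₁ ∈ bigPrimes n y, ∑ p₂ ∈ (bigPrimes n y).filter (p₁ < ·),
            ∑ p₃ ∈ (bigPrimes n y).filter (p₂ < ·), 1)
        + (∑ p₁ ∈ bigPrimes n y, ∑ p₂ ∈ (bigPrimes n y).filter (p₁ < ·),
            ∑ p₃ ∈ (bigPrimes n y).filter (p₂ < ·),
              ∑ p₄ ∈ (bigPrimes n y).filter (p₃ < ·),
                (if Pplus (n / (p₁ * p₂ * p₃ * p₄)) ≤ p₄ then (1 : ℤ) else 0)) := by
  have hy_le : ∀ {p}, p ∈ bigPrimes n y → y ≤ p := fun hp => (mem_bigPrimes.1 hp).2.le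
  have hy_le' : ∀ {p q}, q ∈ (bigPrimes n y).filter (p < ·) → y ≤ q :=
    fun hq => hy_le (Finset.mem_of_mem_filter _ hq)
  rw [buchstab_identity hn hy]
  calc _ = 1 - ∑ p₁ ∈ bigPrimes n y, (1 - ∑ p₂ ∈ (bigPrimes n y).filter (p₁ < ·),
          (1 - ∑ p₃ ∈ (bigPrimes n y).filter (p₂ < ·),
            (1 - ∑ p₄ ∈ (bigPrimes n y).filter (p₃ < ·),
              if Pplus (n / (p₁ * p₂ * p₃ * p₄)) ≤ p₄ then (1 : ℤ) else 0))) := by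
        congr 1
        refine Finset.sum_congr rfl fun p₁ h₁ => ?_
        have hD₁ : p₁ ∣ n ∧ ∀ r ∈ p₁.primeFactors, r ≤ p₁ :=
          ⟨Nat.dvd_of_mem_primeFactors (mem_bigPrimes.1 h₁).1,
            fun _ => Nat.le_of_mem_primeFactors⟩
        rw [buchstab_identity_div hn hD₁.1 hD₁.2 hy (hy_le h₁)]
        congr 1
        refine Finset.sum_congr rfl fun p₂ h₂ => ?_
        have hD₂ := mul_dvd_of_mem_filter_bigPrimes hD₁.1 hD₁.2 h₂
        rw [buchstab_identity_div hn hD₂.1 hD₂.2 hy (hy_le' h₂)]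
        congr 1
        refine Finset.sum_congr rfl fun p₃ h₃ => ?_
        have hD₃ := mul_dvd_of_mem_filter_bigPrimes hD₂.1 hD₂.2 h₃
        rw [buchstab_identity_div hn hD₃.1 hD₃.2 hy (hy_le' h₃)]
    _ = _ := by
        simp only [Finset.sum_sub_distrib]
        ring
end

section
/- Let $d' \geq 1$ be a squarefree odd integer, and for each prime $p \mid d'$ let $\chi_{p^*}$ denote the real primitive character mod $p$ (the Legendre symbol). Let $n, m$ be integers. Then $\prod_{p \mid d'} 2 \cdot \sum_{w \bmod d',\ (w,d')=1,\ \chi_{p^*}(w) = 1\ \forall p \mid d',\ (n - w, d') = (m, d')} \frac{1}{\phi(d'/(n-w, d'))} = \mathbb{1}_{(d', m, n) = 1} \prod_{p \mid d',\ p \mid mn}(1 + \chi_{p^*}(n)) \prod_{p \mid d',\ p \nmid mn}\left(1 - \frac{1 + \chi_{p^*}(n)}{p-1}\right)$. -/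
/-!
The summand is multiplicative in the modulus: by the Chinese remainder theorem
`w ↦ (w mod a, w mod b)` identifies residues mod `a * b` with pairs of residues, and every
condition as well as `φ(d' / (n - w, d'))` splits over coprime factors. So for squarefree `d'`
the sum is a product of prime sums. For an odd prime `p` the summand at a residue `a` is nonzero
only for nonzero squares `a` with `a ≡ n (mod p) ↔ p ∣ m`, where it equals `1` if `p ∣ m`
and `1 / (p - 1)` otherwise. Counting the `(p - 1) / 2` nonzero squares and using
`2 · 𝟙[χ(a) = 1] = 1 + χ(a)` for `a ≠ 0` gives the local factor at `p`.
-/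

open Finset

theorem Finset.sum_range_mul_mod {M : Type*} [AddCommMonoid M] {a b : ℕ} (hab : a.Coprime b)
    (h : ℕ → ℕ → M) :
    ∑ w ∈ range (a * b), h (w % a) (w % b) = ∑ u ∈ range a, ∑ v ∈ range b, h u v := by
  rcases Nat.eq_zero_or_pos a with rfl | ha
  · simp
  rcases Nat.eq_zero_or_pos b with rfl | hb
  · simp
  rw [← sum_product']
  refine sum_nbij' (fun w => (w % a, w % b)) (fun uv => Nat.chineseRemainder hab uv.1 uv.2)
    (fun w _ => by simp [Nat.mod_lt, ha, hb])
    (fun uv _ => mem_range.mpr (Nat.chineseRemainder_lt_mul hab _ _ ha.ne' hb.ne'))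
    (fun w hw => ?_) (fun uv huv => ?_) (fun _ _ => rfl)
  · exact ((Nat.chineseRemainder_modEq_unique hab (Nat.mod_modEq w a).symm
      (Nat.mod_modEq w b).symm).symm).eq_of_lt_of_lt
      (Nat.chineseRemainder_lt_mul hab _ _ ha.ne' hb.ne') (mem_range.mp hw)
  · simp only [mem_product, mem_range] at huv
    have hcrt := (Nat.chineseRemainder hab uv.1 uv.2).2
    ext
    · exact Eq.trans hcrt.1 (Nat.mod_eq_of_lt huv.1)
    · exact Eq.trans hcrt.2 (Nat.mod_eq_of_lt huv.2)

theorem Finset.sum_range_eq_sum_zmod_val {M : Type*} [AddCommMonoid M] (p : ℕ) [NeZero p]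
    (f : ℕ → M) : ∑ w ∈ range p, f w = ∑ a : ZMod p, f a.val :=
  sum_nbij' (fun w => (w : ZMod p)) ZMod.val (fun _ _ => mem_univ _)
    (fun a _ => mem_range.mpr a.val_lt) (fun w hw => ZMod.val_cast_of_lt (mem_range.mp hw))
    (fun a _ => ZMod.natCast_zmod_val a) (fun w hw => by rw [ZMod.val_cast_of_lt (mem_range.mp hw)])

theorem Nat.eq_prod_primeFactors_of_squarefree {M : Type*} [CommMonoid M] {f : ℕ → M}
    (h_mult : ∀ a b, a.Coprime b → f (a * b) = f a * f b) (hf1 : f 1 = 1) {d : ℕ}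
    (hd : Squarefree d) : f d = ∏ p ∈ d.primeFactors, f p := by
  rw [Nat.multiplicative_factorization f h_mult hf1 hd.ne_zero,
    Nat.prod_factorization_eq_prod_primeFactors]
  refine prod_congr rfl fun p hp => ?_
  rw [Nat.factorization_eq_one_of_squarefree hd (Nat.prime_of_mem_primeFactors hp)
    (Nat.dvd_of_mem_primeFactors hp), pow_one]

theorem Nat.Coprime.gcd_mul_eq_gcd_mul_iff {a b : ℕ} (hab : a.Coprime b) (x y : ℕ) :
    x.gcd (a * b) = y.gcd (a * b) ↔ x.gcd a = y.gcd a ∧ x.gcd b = y.gcd b := by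
  have hgcd_left (z : ℕ) : z.gcd a = (z.gcd (a * b)).gcd a := by
    rw [Nat.gcd_assoc, Nat.gcd_eq_right (Nat.dvd_mul_right a b)]
  have hgcd_right (z : ℕ) : z.gcd b = (z.gcd (a * b)).gcd b := by
    rw [Nat.gcd_assoc, Nat.gcd_eq_right (Nat.dvd_mul_left b a)]
  refine ⟨fun h => ⟨?_, ?_⟩, fun h => by rw [hab.gcd_mul, hab.gcd_mul, h.1, h.2]⟩
  · rw [hgcd_left x, hgcd_left y, h]
  · rw [hgcd_right x, hgcd_right y, h]

theorem Int.gcd_natCast_prime {p : ℕ} (hp : p.Prime) (z : ℤ) :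
    Int.gcd z p = if (p : ℤ) ∣ z then p else 1 := by
  split_ifs with h
  · exact Nat.gcd_eq_right (Int.natCast_dvd.mp h)
  · exact Nat.Coprime.symm (hp.coprime_iff_not_dvd.mpr (mt Int.natCast_dvd.mpr h))

theorem Nat.coprime_int_gcd_iff {d : ℕ} (hd : d ≠ 0) (m n : ℤ) :
    d.Coprime (Int.gcd m n) ↔
      ∀ p ∈ d.primeFactors, ¬((p : ℤ) ∣ m ∧ (p : ℤ) ∣ n) := by
  rw [← not_iff_not, Nat.Prime.not_coprime_iff_dvd]
  simp only [Nat.mem_primeFactors, Int.dvd_gcd_iff, hd, ne_eq, not_false_eq_true, and_true,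
    not_forall, not_not, exists_prop, and_assoc]

section QuadraticChar

variable {F : Type*} [Field F] [Fintype F] [DecidableEq F]

theorem two_mul_ite_quadraticChar_eq_one (a : F) :
    2 * (if quadraticChar F a = 1 then (1 : ℚ) else 0)
      = 1 + quadraticChar F a - if a = 0 then 1 else 0 := by
  rcases eq_or_ne a 0 with rfl | ha
  · simp
  · rcases quadraticChar_dichotomy ha with h | h <;> norm_num [h, ha]

theorem sum_ite_quadraticChar_eq_one (hF : ringChar F ≠ 2) :
    ∑ a : F, (if quadraticChar F a = 1 then (1 : ℚ) else 0) = (Fintype.card F - 1) / 2 := by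
  have hsum : ∑ a : F, (quadraticChar F a : ℚ) = 0 := by
    exact_mod_cast quadraticChar_sum_zero hF
  have h2 :
      2 * ∑ a : F, (if quadraticChar F a = 1 then (1 : ℚ) else 0) = Fintype.card F - 1 := by
    simp only [mul_sum, two_mul_ite_quadraticChar_eq_one, sum_sub_distrib, sum_add_distrib, hsum,
      sum_const, card_univ, sum_ite_eq', mem_univ, if_true]
    simp
  linarith

end QuadraticChar

noncomputable def residueWeight (n m : ℤ) (d w : ℕ) : ℚ :=
  if Nat.Coprime w d ∧ (∀ p ∈ d.primeFactors, jacobiSym (w : ℤ) p = 1) ∧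
      Int.gcd (n - (w : ℤ)) d = Int.gcd m d
  then 1 / (Nat.totient (d / Int.gcd (n - (w : ℤ)) d) : ℚ) else 0

noncomputable def localFactor (n m : ℤ) (p : ℕ) : ℚ :=
  if (p : ℤ) ∣ m ∧ (p : ℤ) ∣ n then 0
  else if (p : ℤ) ∣ m * n then 1 + jacobiSym n p
  else 1 - (1 + jacobiSym n p) / ((p : ℚ) - 1)

section Multiplicativity

variable (n m : ℤ)

theorem residueWeight_mod (d w : ℕ) : residueWeight n m d (w % d) = residueWeight n m d w := by
  have hw : ((w % d : ℕ) : ℤ) ≡ w [ZMOD d] := by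
    rw [Int.natCast_mod]; exact Int.mod_modEq w d
  have hjac : (∀ p ∈ d.primeFactors, jacobiSym (w % d : ℕ) p = 1) ↔
      ∀ p ∈ d.primeFactors, jacobiSym w p = 1 := forall₂_congr fun p hp => by
    rw [jacobiSym.mod_left'
      (hw.of_dvd (Int.natCast_dvd_natCast.mpr (Nat.dvd_of_mem_primeFactors hp)))]
  have hgcd : Int.gcd (n - (w % d : ℕ)) d = Int.gcd (n - w) d := by
    rw [← Int.gcd_emod, hw.sub_left n, Int.gcd_emod]
  unfold residueWeight
  simp only [Nat.coprime_iff_gcd_eq_one, (Nat.mod_modEq w d).gcd_eq, hgcd, hjac]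

theorem residueWeight_mul {a b : ℕ} (hab : a.Coprime b) (w : ℕ) :
    residueWeight n m (a * b) w = residueWeight n m a w * residueWeight n m b w := by
  set x := (n - w).natAbs
  have hgcd (k : ℕ) : Int.gcd (n - w) k = x.gcd k := rfl
  have hgcdm (k : ℕ) : Int.gcd m k = m.natAbs.gcd k := rfl
  have hdvd_a : x.gcd a ∣ a := Nat.gcd_dvd_right x a
  have hdvd_b : x.gcd b ∣ b := Nat.gcd_dvd_right x b
  have htotient : ((a * b) / x.gcd (a * b)).totient
      = (a / x.gcd a).totient * (b / x.gcd b).totient := by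
    rw [hab.gcd_mul, ← Nat.div_mul_div_comm hdvd_a hdvd_b, Nat.totient_mul
      ((hab.coprime_dvd_left (Nat.div_dvd_of_dvd hdvd_a)).coprime_dvd_right
        (Nat.div_dvd_of_dvd hdvd_b))]
  unfold residueWeight
  simp only [hgcd, hgcdm]
  simp only [htotient, Nat.coprime_mul_iff_right, hab.primeFactors_mul, forall_mem_union,
    hab.gcd_mul_eq_gcd_mul_iff, ite_zero_mul_ite_zero, Nat.cast_mul, one_div, mul_inv]
  congr 1
  simp only [eq_iff_iff]
  tauto

theorem sum_residueWeight_mul {a b : ℕ} (hab : a.Coprime b) :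
    ∑ w ∈ range (a * b), residueWeight n m (a * b) w =
      (∑ w ∈ range a, residueWeight n m a w) * ∑ w ∈ range b, residueWeight n m b w := by
  rw [sum_mul_sum,
    ← sum_range_mul_mod hab fun u v => residueWeight n m a u * residueWeight n m b v]
  refine sum_congr rfl fun w _ => ?_
  rw [residueWeight_mul n m hab, residueWeight_mod, residueWeight_mod]

theorem sum_residueWeight_eq_prod {d : ℕ} (hd : Squarefree d) :
    ∑ w ∈ range d, residueWeight n m d w =
      ∏ p ∈ d.primeFactors, ∑ w ∈ range p, residueWeight n m p w :=
  Nat.eq_prod_primeFactors_of_squarefree (f := fun d => ∑ w ∈ range d, residueWeight n m d w)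
    (fun _ _ => sum_residueWeight_mul n m) (by simp [residueWeight]) hd

end Multiplicativity

section Prime

variable {p : ℕ} [Fact p.Prime] (n m : ℤ)

theorem residueWeight_prime_val (a : ZMod p) :
    residueWeight n m p a.val = if quadraticChar (ZMod p) a = 1 ∧ (a = n ↔ (p : ℤ) ∣ m)
      then (if (p : ℤ) ∣ m then 1 else 1 / ((p : ℚ) - 1)) else 0 := by
  have hp : p.Prime := Fact.out
  have hsub : (p : ℤ) ∣ n - a.val ↔ a = n := by
    rw [← ZMod.intCast_zmod_eq_zero_iff_dvd]
    push_cast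
    rw [ZMod.natCast_zmod_val, sub_eq_zero, eq_comm]
  have hjac : jacobiSym a.val p = quadraticChar (ZMod p) a := by
    rw [← jacobiSym.legendreSym.to_jacobiSym]
    simp [legendreSym]
  have hunit :
      a.val.Coprime p ∧ quadraticChar (ZMod p) a = 1 ↔ quadraticChar (ZMod p) a = 1 := by
    refine and_iff_right_of_imp fun h => ?_
    rw [Nat.coprime_comm, hp.coprime_iff_not_dvd, ← ZMod.natCast_eq_zero_iff,
      ZMod.natCast_zmod_val]
    rintro rfl
    simp at h
  unfold residueWeight
  simp only [hp.primeFactors, mem_singleton, forall_eq, Int.gcd_natCast_prime hp, hsub, hjac,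
    ← and_assoc, hunit]
  by_cases ha : a = n <;> by_cases hm : (p : ℤ) ∣ m <;>
    simp only [ha, hm, if_true, if_false, iff_true, iff_false, not_true, and_true,
      and_false, hp.one_lt.ne', hp.one_lt.ne, Nat.div_self hp.pos, Nat.div_one, Nat.totient_one,
      Nat.totient_prime hp, Nat.cast_one, div_one, Nat.cast_pred hp.pos]

theorem sum_residueWeight_prime :
    ∑ w ∈ range p, residueWeight n m p w =
      if (p : ℤ) ∣ m then (if quadraticChar (ZMod p) n = 1 then 1 else 0)
      else (∑ a : ZMod p, (if quadraticChar (ZMod p) a = 1 then 1 else 0)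
        - if quadraticChar (ZMod p) n = 1 then 1 else 0) / ((p : ℚ) - 1) := by
  rw [sum_range_eq_sum_zmod_val, sum_congr rfl fun a _ => residueWeight_prime_val n m a]
  by_cases hm : (p : ℤ) ∣ m
  · simp only [hm, if_true, iff_true, and_comm (a := quadraticChar _ _ = 1), ite_and]
    rw [sum_ite_eq', if_pos (mem_univ _)]
  · simp only [hm, if_false, iff_false, and_comm (a := quadraticChar _ _ = 1), ite_and,
      ← sum_filter, filter_ne', sum_erase_eq_sub (mem_univ _), sub_div, sum_div, ite_div,
      zero_div]

theorem two_mul_sum_residueWeight_prime (hp2 : p ≠ 2) :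
    2 * ∑ w ∈ range p, residueWeight n m p w = localFactor n m p := by
  have hp : p.Prime := Fact.out
  have hp1 : (p : ℚ) - 1 ≠ 0 := sub_ne_zero.mpr (by exact_mod_cast hp.one_lt.ne')
  have hχ : quadraticChar (ZMod p) n = jacobiSym n p := by
    rw [← jacobiSym.legendreSym.to_jacobiSym]; rfl
  have hsquares := sum_ite_quadraticChar_eq_one (F := ZMod p) (by rwa [ZMod.ringChar_zmod_n])
  have hnsquare := two_mul_ite_quadraticChar_eq_one (n : ZMod p)
  simp only [hχ, ZMod.intCast_zmod_eq_zero_iff_dvd] at hnsquare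
  rw [ZMod.card] at hsquares
  rw [sum_residueWeight_prime, localFactor, hsquares]
  simp only [(Nat.prime_iff_prime_int.mp hp).dvd_mul, hχ]
  set I : ℚ := if jacobiSym n p = 1 then 1 else 0
  by_cases hn : (p : ℤ) ∣ n
  · have hJ : jacobiSym n p = 0 := by
      rw [jacobiSym.eq_zero_iff_not_coprime, Int.gcd_natCast_prime hp, if_pos hn]
      exact hp.one_lt.ne'
    by_cases hm : (p : ℤ) ∣ m
    · simp only [hm, hn, hJ, Int.cast_zero, and_self, if_true] at hnsquare ⊢
      linarith
    · simp only [hm, hn, hJ, Int.cast_zero, and_true, or_true, if_true, if_false] at hnsquare ⊢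
      field_simp
      linarith
  · by_cases hm : (p : ℤ) ∣ m
    · simp only [hm, hn, and_false, or_false, if_true, if_false] at hnsquare ⊢
      linarith
    · simp only [hm, hn, and_false, or_false, if_false] at hnsquare ⊢
      field_simp
      linarith

end Prime

theorem prod_localFactor (n m : ℤ) {d : ℕ} (hd : d ≠ 0) :
    ∏ p ∈ d.primeFactors, localFactor n m p =
      (if Nat.gcd d (Int.gcd m n) = 1 then (1 : ℚ) else 0) *
        (∏ p ∈ d.primeFactors.filter (fun p : ℕ => (p : ℤ) ∣ m * n),
          (1 + (jacobiSym n p : ℚ))) *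
        (∏ p ∈ d.primeFactors.filter (fun p : ℕ => ¬ (p : ℤ) ∣ m * n),
          (1 - (1 + (jacobiSym n p : ℚ)) / ((p : ℚ) - 1))) := by
  have hlocal (p : ℕ) : localFactor n m p = if ¬((p : ℤ) ∣ m ∧ (p : ℤ) ∣ n) then
      (if (p : ℤ) ∣ m * n then 1 + (jacobiSym n p : ℚ)
        else 1 - (1 + (jacobiSym n p : ℚ)) / ((p : ℚ) - 1)) else 0 :=
    (ite_not _ _ _).symm
  simp only [hlocal, prod_ite_zero, prod_ite, Nat.coprime_int_gcd_iff hd, ite_mul, one_mul,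
    zero_mul]

theorem stmt9_general (d' : ℕ) (hsq : Squarefree d') (hodd : Odd d') (n m : ℤ) :
    (∏ p ∈ d'.primeFactors, (2 : ℚ)) *
      ∑ w ∈ Finset.range d',
        (if Nat.Coprime w d' ∧ (∀ p ∈ d'.primeFactors, jacobiSym (w : ℤ) p = 1) ∧
            Int.gcd (n - (w : ℤ)) d' = Int.gcd m d'
          then (1 : ℚ) / (Nat.totient (d' / Int.gcd (n - (w : ℤ)) d') : ℚ) else 0)
      = (if Nat.gcd d' (Int.gcd m n) = 1 then (1 : ℚ) else 0) *
          (∏ p ∈ d'.primeFactors.filter (fun p : ℕ => (p : ℤ) ∣ m * n),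
            (1 + (jacobiSym n p : ℚ))) *
          (∏ p ∈ d'.primeFactors.filter (fun p : ℕ => ¬ (p : ℤ) ∣ m * n),
            (1 - (1 + (jacobiSym n p : ℚ)) / ((p : ℚ) - 1))) := by
  have hlocal : ∀ p ∈ d'.primeFactors,
      2 * ∑ w ∈ range p, residueWeight n m p w = localFactor n m p := fun p hp =>
    haveI : Fact p.Prime := ⟨Nat.prime_of_mem_primeFactors hp⟩
    two_mul_sum_residueWeight_prime n m (hodd.ne_two_of_dvd_nat (Nat.dvd_of_mem_primeFactors hp))
  rw [← prod_localFactor n m hsq.ne_zero, ← prod_congr rfl hlocal, prod_mul_distrib,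
    ← sum_residueWeight_eq_prod n m hsq]
  rfl

/-- Evaluation of the `w`-sum: for `d'` odd squarefree and integers `n, m`,
`∏_{p ∣ d'} 2 · ∑_{w mod d', (w,d')=1, (w/p)=1 ∀ p∣d', (n-w,d')=(m,d')} 1/φ(d'/(n-w,d'))`
equals
`𝟙_{(d',m,n)=1} ∏_{p∣d', p∣mn}(1+χ_{p*}(n)) ∏_{p∣d', p∤mn}(1-(1+χ_{p*}(n))/(p-1))`. -/
theorem stmt9 (d' : ℕ) (hd : 0 < d') (hsq : Squarefree d') (hodd : Odd d') (n m : ℤ) :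
    (∏ p ∈ d'.primeFactors, (2 : ℚ)) *
      ∑ w ∈ Finset.range d',
        (if Nat.Coprime w d' ∧ (∀ p ∈ d'.primeFactors, jacobiSym (w : ℤ) p = 1) ∧
            Int.gcd (n - (w : ℤ)) d' = Int.gcd m d'
          then (1 : ℚ) / (Nat.totient (d' / Int.gcd (n - (w : ℤ)) d') : ℚ) else 0)
      = (if Nat.gcd d' (Int.gcd m n) = 1 then (1 : ℚ) else 0) *
          (∏ p ∈ d'.primeFactors.filter (fun p : ℕ => (p : ℤ) ∣ m * n),
            (1 + (jacobiSym n p : ℚ))) *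
          (∏ p ∈ d'.primeFactors.filter (fun p : ℕ => ¬ (p : ℤ) ∣ m * n),
            (1 - (1 + (jacobiSym n p : ℚ)) / ((p : ℚ) - 1))) :=
  stmt9_general d' hsq hodd n m
end

section
/- Let $p$ be an odd prime, $m$ a positive integer whose odd part is squarefree, and $n$ a positive integer. Then $\sum_{a_d \mid p^\infty,\ (n, a_d p^2) = (m, a_d p^2)} \frac{\chi_{-4}(a_d)}{\phi(a_d p^2 / (n, a_d p^2))}$ equals $\frac{1}{(p-1)(p - \chi_{-4}(p))}$ if $p \nmid mn$, equals $\frac{p}{(p-1)(p - \chi_{-4}(p))}$ if $p \| m$ and $p \| n$, and equals $0$ otherwise. -/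
/-- The nontrivial Dirichlet character modulo 4. -/
def chi4 (d : ℕ) : ℤ := if d % 4 = 1 then 1 else if d % 4 = 3 then -1 else 0

/-!
Since `p² ∤ m`, `gcd(m, p^(k+2)) = p^v` with `v = v_p(m) ≤ 1` for every `k`, so the gcd condition
says that `p^v` divides `n` exactly, independently of `k`. When it holds, the summand is
`χ₋₄(p)^k / φ(p^(k+2-v))`, a geometric series of ratio `χ₋₄(p)/p`.
-/

theorem chi4_eq_χ₄ (d : ℕ) : chi4 d = ZMod.χ₄ d := by
  rw [ZMod.χ₄_nat_eq_if_mod_four, chi4]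
  split_ifs <;> omega

theorem chi4_pow (a k : ℕ) : chi4 (a ^ k) = chi4 a ^ k := by
  rw [chi4_eq_χ₄, chi4_eq_χ₄, Nat.cast_pow, map_pow]

theorem abs_chi4_le_one (d : ℕ) : |(chi4 d : ℝ)| ≤ 1 := by
  unfold chi4; split_ifs <;> norm_num

theorem Nat.gcd_prime_pow_eq_pow_iff {p n v j : ℕ} (hp : p.Prime) (hvj : v < j) :
    Nat.gcd n (p ^ j) = p ^ v ↔ p ^ v ∣ n ∧ ¬ p ^ (v + 1) ∣ n := by
  constructor
  · intro h
    refine ⟨h ▸ Nat.gcd_dvd_left n (p ^ j), fun hdvd => ?_⟩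
    have : p ^ (v + 1) ∣ p ^ v := h ▸ Nat.dvd_gcd hdvd (Nat.pow_dvd_pow p hvj)
    exact absurd (Nat.pow_dvd_pow_iff_le_right hp.one_lt |>.1 this) (by omega)
  · rintro ⟨hv, hv'⟩
    obtain ⟨i, hij, hi⟩ := (Nat.dvd_prime_pow hp).1 (Nat.gcd_dvd_right n (p ^ j))
    have hvi : v ≤ i := (Nat.pow_dvd_pow_iff_le_right hp.one_lt).1
      (hi ▸ Nat.dvd_gcd hv (Nat.pow_dvd_pow p hvj.le))
    have hiv : ¬ v + 1 ≤ i := fun hle =>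
      hv' ((Nat.pow_dvd_pow p hle).trans (hi ▸ Nat.gcd_dvd_left n (p ^ j)))
    rw [hi, show i = v by omega]

theorem Nat.not_sq_dvd_of_squarefree_ordCompl {p q m : ℕ} (hp : p ≠ 1) (hpq : p.Coprime q)
    (h : Squarefree (m / q ^ m.factorization q)) : ¬ p ^ 2 ∣ m := by
  intro hdvd
  rw [← Nat.ordProj_mul_ordCompl_eq_self m q, sq] at hdvd
  exact hp (Nat.isUnit_iff.1 (h p (((hpq.mul_left hpq).pow_right _).dvd_of_dvd_mul_left hdvd)))

theorem tsum_chi4_pow_div_totient {p : ℕ} (hp : p.Prime) (c : ℕ) :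
    ∑' k : ℕ, (chi4 (p ^ k) : ℝ) / (Nat.totient (p ^ (k + c + 1)) : ℝ)
      = p / (p ^ c * (p - 1) * (p - chi4 p)) := by
  have hp1 : (1 : ℝ) < p := by exact_mod_cast hp.one_lt
  have hχ := abs_le.1 (abs_chi4_le_one p)
  have hratio : ‖(chi4 p : ℝ) / p‖ < 1 := by
    rw [norm_div, Real.norm_natCast, div_lt_one (by linarith), Real.norm_eq_abs]
    exact (abs_chi4_le_one p).trans_lt hp1
  have hterm : ∀ k : ℕ, (chi4 (p ^ k) : ℝ) / (Nat.totient (p ^ (k + c + 1)) : ℝ)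
      = ((chi4 p : ℝ) / p) ^ k * (1 / (p ^ c * (p - 1))) := by
    intro k
    rw [chi4_pow, Nat.totient_prime_pow_succ hp, Nat.cast_mul, Nat.cast_pred hp.pos]
    have : (p : ℝ) - 1 ≠ 0 := by linarith
    have : (p : ℝ) ≠ 0 := by linarith
    push_cast
    rw [div_pow, pow_add]
    field_simp
  have : (p : ℝ) - chi4 p ≠ 0 := by linarith
  rw [tsum_congr hterm, tsum_mul_right, tsum_geometric_of_norm_lt_one hratio]
  field_simp

theorem tsum_ite_gcd_eq {p m v : ℕ} (n : ℕ) (hp : p.Prime) (hv : v ≤ 1) (hvm : p ^ v ∣ m)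
    (hvm' : ¬ p ^ (v + 1) ∣ m) :
    ∑' k : ℕ,
        (if Nat.gcd n (p ^ k * p ^ 2) = Nat.gcd m (p ^ k * p ^ 2)
          then (chi4 (p ^ k) : ℝ) /
            (Nat.totient (p ^ k * p ^ 2 / Nat.gcd n (p ^ k * p ^ 2)) : ℝ)
          else 0)
      = if p ^ v ∣ n ∧ ¬ p ^ (v + 1) ∣ n
          then (p : ℝ) / (p ^ (1 - v) * (p - 1) * (p - chi4 p)) else 0 := by
  have hgcd_iff (a k : ℕ) : Nat.gcd a (p ^ (k + 2)) = p ^ v ↔ p ^ v ∣ a ∧ ¬ p ^ (v + 1) ∣ a :=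
    Nat.gcd_prime_pow_eq_pow_iff hp (by omega)
  have hgcdm (k : ℕ) : Nat.gcd m (p ^ k * p ^ 2) = p ^ v := by
    rw [← pow_add, hgcd_iff]
    exact ⟨hvm, hvm'⟩
  simp_rw [hgcdm, ← pow_add, hgcd_iff]
  split_ifs with hn
  · rw [← tsum_chi4_pow_div_totient hp]
    refine tsum_congr fun k => ?_
    rw [(hgcd_iff n k).2 hn, Nat.pow_div (by omega) hp.pos]
    congr 4
    omega
  · simp

theorem stmt10_general (p : ℕ) (hp : p.Prime) (hp2 : p ≠ 2) (m n : ℕ)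
    (hmsq : Squarefree (m / 2 ^ (m.factorization 2))) :
    ∑' k : ℕ,
        (if Nat.gcd n (p ^ k * p ^ 2) = Nat.gcd m (p ^ k * p ^ 2)
          then (chi4 (p ^ k) : ℝ) /
            (Nat.totient (p ^ k * p ^ 2 / Nat.gcd n (p ^ k * p ^ 2)) : ℝ)
          else 0)
      = if ¬ p ∣ m * n then 1 / (((p : ℝ) - 1) * ((p : ℝ) - (chi4 p : ℝ)))
        else if p ∣ m ∧ ¬ p ^ 2 ∣ m ∧ p ∣ n ∧ ¬ p ^ 2 ∣ n
          then (p : ℝ) / (((p : ℝ) - 1) * ((p : ℝ) - (chi4 p : ℝ)))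
        else 0 := by
  have hm2 : ¬ p ^ 2 ∣ m := Nat.not_sq_dvd_of_squarefree_ordCompl hp.ne_one
    ((Nat.coprime_primes hp Nat.prime_two).2 hp2) hmsq
  by_cases hpm : p ∣ m
  · rw [tsum_ite_gcd_eq n hp le_rfl (by simpa) hm2]
    simp [hpm, hm2, dvd_mul_of_dvd_left hpm]
  · rw [tsum_ite_gcd_eq n hp zero_le_one (one_dvd m) (by simpa)]
    have : (p : ℝ) ≠ 0 := by exact_mod_cast hp.ne_zero
    by_cases hpn : p ∣ n <;> simp [hpm, hpn, hp.prime.dvd_mul]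
    field_simp

/-- For an odd prime `p`, a positive integer `m` with squarefree odd part, and a positive
integer `n`, the sum `∑_{a_d ∣ p^∞, (n, a_d p²)=(m, a_d p²)} χ₋₄(a_d)/φ(a_d p²/(n, a_d p²))`
equals `1/((p-1)(p-χ₋₄(p)))` if `p ∤ mn`, equals `p/((p-1)(p-χ₋₄(p)))` if `p ∥ m` and
`p ∥ n`, and equals `0` otherwise. -/
theorem stmt10 (p : ℕ) (hp : p.Prime) (hp2 : p ≠ 2) (m n : ℕ) (hm : 0 < m) (hn : 0 < n)
    (hmsq : Squarefree (m / 2 ^ (m.factorization 2))) :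
    ∑' k : ℕ,
        (if Nat.gcd n (p ^ k * p ^ 2) = Nat.gcd m (p ^ k * p ^ 2)
          then (chi4 (p ^ k) : ℝ) /
            (Nat.totient (p ^ k * p ^ 2 / Nat.gcd n (p ^ k * p ^ 2)) : ℝ)
          else 0)
      = if ¬ p ∣ m * n then 1 / (((p : ℝ) - 1) * ((p : ℝ) - (chi4 p : ℝ)))
        else if p ∣ m ∧ ¬ p ^ 2 ∣ m ∧ p ∣ n ∧ ¬ p ^ 2 ∣ n
          then (p : ℝ) / (((p : ℝ) - 1) * ((p : ℝ) - (chi4 p : ℝ)))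
        else 0 :=
  stmt10_general p hp hp2 m n hmsq
end
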